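/- Let $z \in \mathbb{C}^4$ and suppose there is a partition $\{i_1,i_2\} \sqcup \{i_3,i_4\} = \{1,2,3,4\}$ with $|z_{i_1}| = |z_{i_2}| = r$ and $|z_{i_3}| = |z_{i_4}| = s$. Then $\|z\|_{\mathsf{X}} = 2\sqrt{r^2 + s^2 + 2rs|\cos(\phi_z/2)|}$, where $\phi_z$ is the phase difference of $z$. -/

import Mathlib

/-!
With `a = arg z₀ + arg z₃`, `b = arg z₁ + arg z₂` and `δ = φ_z / 2 = (a - b) / 2`, rotating by
`exp (i arg z₃)` gives `‖z₀ e^{iσ} + conj z₃‖ = ‖ |z₀| e^{i(σ + a)} + |z₃| ‖`, the law-of-cosines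
length `√(|z₀|² + |z₃|² + 2 |z₀| |z₃| cos (σ + a))`, and likewise for the second term with `b`.
The partition either puts equal moduli in each of the pairs `(z₀, z₃)`, `(z₁, z₂)`, or one `r`
and one `s` in each.

* Equal moduli: the terms are `2r |cos ((σ + a)/2)|` and `2s |cos ((σ + b)/2)|`. Replacing the
  absolute values by `±r`, `±s` leaves a sinusoid `u cos t + v cos (t - δ)` of amplitude
  `√(u² + v² + 2uv cos δ)`, largest when the signs make `uv cos δ = rs |cos δ|`.
* Mixed moduli: `√x + √y ≤ √(2 (x + y))` and
  `cos (σ + a) + cos (σ + b) = 2 cos (σ + (a + b)/2) cos δ`; both are equalities when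
  `cos (σ + a) = cos (σ + b) = |cos δ|`.
-/

open Complex Real

noncomputable def Xfun (z : Fin 4 → ℂ) (σ : ℝ) : ℝ :=
  ‖z 0 * Complex.exp (σ * Complex.I) + (starRingEnd ℂ) (z 3)‖ +
  ‖z 1 * Complex.exp (σ * Complex.I) + (starRingEnd ℂ) (z 2)‖

noncomputable def Xnorm (z : Fin 4 → ℂ) : ℝ := ⨆ σ : ℝ, Xfun z σ

noncomputable def phase (z : Fin 4 → ℂ) : ℝ :=
  (Complex.arg (z 0) + Complex.arg (z 3)) - (Complex.arg (z 1) + Complex.arg (z 2))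

open Set

noncomputable def lawOfCosines (p q θ : ℝ) : ℝ := √(p ^ 2 + q ^ 2 + 2 * p * q * Real.cos θ)

lemma lawOfCosines_comm (p q θ : ℝ) : lawOfCosines p q θ = lawOfCosines q p θ := by
  unfold lawOfCosines
  ring_nf

lemma lawOfCosines_self {r : ℝ} (hr : 0 ≤ r) (θ : ℝ) :
    lawOfCosines r r θ = 2 * r * |Real.cos (θ / 2)| := by
  rw [lawOfCosines, ← Real.sqrt_sq (by positivity : 0 ≤ 2 * r * |Real.cos (θ / 2)|), mul_pow,
    sq_abs, Real.cos_sq]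
  ring_nf

lemma sq_add_sq_add_mul_cos_nonneg (p q θ : ℝ) : 0 ≤ p ^ 2 + q ^ 2 + 2 * p * q * Real.cos θ := by
  have h₁ : 0 ≤ (p + q) ^ 2 * (1 + Real.cos θ) :=
    mul_nonneg (sq_nonneg _) (by linarith [Real.neg_one_le_cos θ])
  have h₂ : 0 ≤ (p - q) ^ 2 * (1 - Real.cos θ) :=
    mul_nonneg (sq_nonneg _) (by linarith [Real.cos_le_one θ])
  linarith

lemma norm_ofReal_mul_exp_add_ofReal (p q θ : ℝ) :
    ‖(p : ℂ) * Complex.exp (θ * Complex.I) + q‖ = lawOfCosines p q θ := by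
  rw [Complex.norm_def, Complex.normSq_apply, lawOfCosines]
  congr 1
  simp only [Complex.add_re, Complex.add_im, Complex.mul_re, Complex.mul_im, Complex.ofReal_re,
    Complex.ofReal_im, Complex.exp_ofReal_mul_I_re, Complex.exp_ofReal_mul_I_im]
  linear_combination p ^ 2 * Real.sin_sq_add_cos_sq θ

lemma norm_mul_exp_add_conj (w₁ w₂ : ℂ) (σ : ℝ) :
    ‖w₁ * Complex.exp (σ * Complex.I) + (starRingEnd ℂ) w₂‖ =
      lawOfCosines ‖w₁‖ ‖w₂‖ (σ + (Complex.arg w₁ + Complex.arg w₂)) := by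
  rw [← norm_ofReal_mul_exp_add_ofReal]
  conv_lhs => rw [← Complex.norm_mul_exp_arg_mul_I w₁, ← Complex.norm_mul_exp_arg_mul_I w₂]
  have hrot :
      (‖w₁‖ : ℂ) * Complex.exp (Complex.arg w₁ * Complex.I) * Complex.exp (σ * Complex.I) +
        (starRingEnd ℂ) (‖w₂‖ * Complex.exp (Complex.arg w₂ * Complex.I)) =
      ((‖w₁‖ : ℂ) * Complex.exp (↑(σ + (Complex.arg w₁ + Complex.arg w₂)) * Complex.I) + ‖w₂‖) *
        Complex.exp (-(Complex.arg w₂ * Complex.I)) := by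
    simp only [map_mul, Complex.conj_ofReal, ← Complex.exp_conj, Complex.conj_I, add_mul,
      mul_assoc, ← Complex.exp_add]
    push_cast
    ring_nf
  rw [hrot, norm_mul, ← neg_mul, ← Complex.ofReal_neg, Complex.norm_exp_ofReal_mul_I, mul_one]

lemma isGreatest_range_mul_cos_add_mul_sin (a b : ℝ) :
    IsGreatest (range fun t => a * Real.cos t + b * Real.sin t) √(a ^ 2 + b ^ 2) := by
  set w : ℂ := ⟨a, b⟩
  have hw : ‖w‖ ^ 2 = a ^ 2 + b ^ 2 := by rw [Complex.sq_norm, Complex.normSq_mk]; ring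
  refine ⟨⟨Complex.arg w, ?_⟩, forall_mem_range.2 fun t => ?_⟩
  · rw [← hw, Real.sqrt_sq (norm_nonneg w)]
    rcases eq_or_ne ‖w‖ 0 with h | h
    · obtain ⟨rfl, rfl⟩ : a = 0 ∧ b = 0 := by simpa [w, Complex.ext_iff] using h
      simp [h]
    · refine mul_left_cancel₀ h ?_
      linear_combination a * Complex.norm_mul_cos_arg w + b * Complex.norm_mul_sin_arg w - hw
  · refine (le_abs_self _).trans (Real.abs_le_sqrt ?_)
    nlinarith [sq_nonneg (a * Real.sin t - b * Real.cos t), Real.sin_sq_add_cos_sq t]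

lemma isGreatest_range_mul_cos_add_mul_cos_sub (u v δ : ℝ) :
    IsGreatest (range fun t => u * Real.cos t + v * Real.cos (t - δ)) (lawOfCosines u v δ) := by
  convert isGreatest_range_mul_cos_add_mul_sin (u + v * Real.cos δ) (v * Real.sin δ) using 2
  · ext t
    rw [Real.cos_sub]
    ring
  · rw [lawOfCosines]
    congr 1
    linear_combination (-v ^ 2) * Real.sin_sq_add_cos_sq δ

lemma exists_abs_eq_and_mul_eq {r : ℝ} (hr : 0 ≤ r) (x : ℝ) :
    ∃ u, |u| = r ∧ u * x = r * |x| := by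
  rcases abs_cases x with ⟨hx, -⟩ | ⟨hx, -⟩
  · exact ⟨r, abs_of_nonneg hr, by rw [hx]⟩
  · exact ⟨-r, by rw [abs_neg, abs_of_nonneg hr], by rw [hx]; ring⟩

lemma lawOfCosines_le_of_abs_eq {u v r s : ℝ} (hu : |u| = r) (hv : |v| = s) (θ : ℝ) :
    lawOfCosines u v θ ≤ √(r ^ 2 + s ^ 2 + 2 * r * s * |Real.cos θ|) := by
  refine Real.sqrt_le_sqrt ?_
  have huv : u * v * Real.cos θ ≤ r * s * |Real.cos θ| := by
    rw [← hu, ← hv, ← abs_mul, ← abs_mul]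
    exact le_abs_self _
  rw [← sq_abs u, ← sq_abs v, hu, hv]
  linarith

lemma isGreatest_range_abs_cos_add_abs_cos_sub {r s : ℝ} (hr : 0 ≤ r) (hs : 0 ≤ s) (δ : ℝ) :
    IsGreatest (range fun t => r * |Real.cos t| + s * |Real.cos (t - δ)|)
      √(r ^ 2 + s ^ 2 + 2 * r * s * |Real.cos δ|) := by
  have hle : ∀ t, r * |Real.cos t| + s * |Real.cos (t - δ)| ≤
      √(r ^ 2 + s ^ 2 + 2 * r * s * |Real.cos δ|) := by
    intro t
    obtain ⟨u, hu, hut⟩ := exists_abs_eq_and_mul_eq hr (Real.cos t)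
    obtain ⟨v, hv, hvt⟩ := exists_abs_eq_and_mul_eq hs (Real.cos (t - δ))
    rw [← hut, ← hvt]
    exact ((isGreatest_range_mul_cos_add_mul_cos_sub u v δ).2 ⟨t, rfl⟩).trans
      (lawOfCosines_le_of_abs_eq hu hv δ)
  obtain ⟨v, hv, hvδ⟩ := exists_abs_eq_and_mul_eq hs (Real.cos δ)
  obtain ⟨⟨t, ht⟩, -⟩ := isGreatest_range_mul_cos_add_mul_cos_sub r v δ
  dsimp only at ht
  refine ⟨⟨t, (hle t).antisymm ?_⟩, forall_mem_range.2 hle⟩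
  have hcos : r * Real.cos t ≤ r * |Real.cos t| := mul_le_mul_of_nonneg_left (le_abs_self _) hr
  have hcos' : v * Real.cos (t - δ) ≤ s * |Real.cos (t - δ)| := by
    rw [← hv, ← abs_mul]
    exact le_abs_self _
  have hval : √(r ^ 2 + s ^ 2 + 2 * r * s * |Real.cos δ|) =
      r * Real.cos t + v * Real.cos (t - δ) := by
    rw [ht, lawOfCosines, ← sq_abs v, hv, mul_assoc (2 * r) v, hvδ, mul_assoc (2 * r) s]
  linarith

lemma isGreatest_range_lawOfCosines_self_add_lawOfCosines_self {r s : ℝ} (hr : 0 ≤ r)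
    (hs : 0 ≤ s) (a b : ℝ) :
    IsGreatest (range fun σ => lawOfCosines r r (σ + a) + lawOfCosines s s (σ + b))
      (2 * √(r ^ 2 + s ^ 2 + 2 * r * s * |Real.cos ((a - b) / 2)|)) := by
  obtain ⟨⟨t, ht⟩, hle⟩ := isGreatest_range_abs_cos_add_abs_cos_sub hr hs ((a - b) / 2)
  simp only [lawOfCosines_self hr, lawOfCosines_self hs]
  refine ⟨⟨2 * t - a, ?_⟩, forall_mem_range.2 fun σ => ?_⟩
  · dsimp only at ht ⊢
    rw [show (2 * t - a + a) / 2 = t by ring, show (2 * t - a + b) / 2 = t - (a - b) / 2 by ring]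
    linarith
  · have hσ := hle ⟨(σ + a) / 2, rfl⟩
    dsimp only at hσ ⊢
    rw [show (σ + b) / 2 = (σ + a) / 2 - (a - b) / 2 by ring]
    linarith

lemma sqrt_add_sqrt_le_two_mul_sqrt {x y m : ℝ} (hx : 0 ≤ x) (hy : 0 ≤ y) (h : x + y ≤ 2 * m) :
    √x + √y ≤ 2 * √m := by
  have hm : 0 ≤ m := by linarith
  refine le_of_pow_le_pow_left₀ two_ne_zero (by positivity) ?_
  nlinarith [Real.sq_sqrt hx, Real.sq_sqrt hy, Real.sq_sqrt hm, sq_nonneg (√x - √y)]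

lemma exists_cos_add_eq_abs_and_cos_sub_eq_abs (δ : ℝ) :
    ∃ e, Real.cos (e + δ) = |Real.cos δ| ∧ Real.cos (e - δ) = |Real.cos δ| := by
  rcases abs_cases (Real.cos δ) with ⟨h, -⟩ | ⟨h, -⟩
  · exact ⟨0, by simp [h], by simp [h]⟩
  · refine ⟨π, ?_, ?_⟩
    · rw [h, add_comm, Real.cos_add_pi]
    · rw [h, Real.cos_pi_sub]

lemma isGreatest_range_lawOfCosines_add_lawOfCosines {r s : ℝ} (hrs : 0 ≤ r * s) (a b : ℝ) :
    IsGreatest (range fun σ => lawOfCosines r s (σ + a) + lawOfCosines r s (σ + b))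
      (2 * √(r ^ 2 + s ^ 2 + 2 * r * s * |Real.cos ((a - b) / 2)|)) := by
  set δ := (a - b) / 2 with hδ
  obtain ⟨e, ha, hb⟩ := exists_cos_add_eq_abs_and_cos_sub_eq_abs δ
  refine ⟨⟨e - (a + b) / 2, ?_⟩, forall_mem_range.2 fun σ => ?_⟩
  · dsimp only
    rw [show e - (a + b) / 2 + a = e + δ by ring, show e - (a + b) / 2 + b = e - δ by ring]
    simp only [lawOfCosines, ha, hb]
    ring
  · refine sqrt_add_sqrt_le_two_mul_sqrt (sq_add_sq_add_mul_cos_nonneg _ _ _)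
      (sq_add_sq_add_mul_cos_nonneg _ _ _) ?_
    have hsum : Real.cos (σ + a) + Real.cos (σ + b) =
        2 * Real.cos (σ + (a + b) / 2) * Real.cos δ := by
      rw [Real.cos_add_cos, show (σ + a + (σ + b)) / 2 = σ + (a + b) / 2 by ring,
        show (σ + a - (σ + b)) / 2 = δ by rw [hδ]; ring]
    have hprod : Real.cos (σ + (a + b) / 2) * Real.cos δ ≤ |Real.cos δ| := by
      calc Real.cos (σ + (a + b) / 2) * Real.cos δ
          ≤ |Real.cos (σ + (a + b) / 2)| * |Real.cos δ| := by rw [← abs_mul]; exact le_abs_self _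
        _ ≤ |Real.cos δ| := mul_le_of_le_one_left (abs_nonneg _) (Real.abs_cos_le_one _)
    nlinarith [mul_le_mul_of_nonneg_left hprod hrs]

lemma values_cases_of_cover_fin_four {α : Type*} {n : Fin 4 → α} {r s : α}
    {i₁ i₂ i₃ i₄ : Fin 4}
    (hpart : ({i₁, i₂, i₃, i₄} : Finset (Fin 4)) = Finset.univ)
    (h₁ : n i₁ = r) (h₂ : n i₂ = r) (h₃ : n i₃ = s) (h₄ : n i₄ = s) :
    (n 0 = r ∧ n 3 = r ∧ n 1 = s ∧ n 2 = s) ∨ (n 0 = s ∧ n 3 = s ∧ n 1 = r ∧ n 2 = r) ∨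
      ((n 0 = r ∧ n 3 = s ∨ n 0 = s ∧ n 3 = r) ∧ (n 1 = r ∧ n 2 = s ∨ n 1 = s ∧ n 2 = r)) := by
  -- `hpart` forces `i₁, i₂, i₃, i₄` to be a permutation of `0, 1, 2, 3`
  fin_cases i₁ <;> fin_cases i₂ <;> fin_cases i₃ <;> fin_cases i₄ <;>
    first
    | (exfalso; revert hpart; decide)
    | simp_all

lemma lawOfCosines_eq_of_pair {p q r s : ℝ} (h : p = r ∧ q = s ∨ p = s ∧ q = r) (θ : ℝ) :
    lawOfCosines p q θ = lawOfCosines r s θ := by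
  rcases h with ⟨rfl, rfl⟩ | ⟨rfl, rfl⟩
  · rfl
  · exact lawOfCosines_comm _ _ _

theorem stmt_11_general (z : Fin 4 → ℂ) (r s : ℝ) (i₁ i₂ i₃ i₄ : Fin 4)
    (hpart : ({i₁, i₂, i₃, i₄} : Finset (Fin 4)) = Finset.univ)
    (h1 : ‖z i₁‖ = r) (h2 : ‖z i₂‖ = r)
    (h3 : ‖z i₃‖ = s) (h4 : ‖z i₄‖ = s) :
    Xnorm z = 2 * Real.sqrt (r ^ 2 + s ^ 2 + 2 * r * s * |Real.cos (phase z / 2)|) := by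
  have hr : 0 ≤ r := h1 ▸ norm_nonneg _
  have hs : 0 ≤ s := h3 ▸ norm_nonneg _
  have hX : Xnorm z = ⨆ σ : ℝ,
      lawOfCosines ‖z 0‖ ‖z 3‖ (σ + (Complex.arg (z 0) + Complex.arg (z 3))) +
        lawOfCosines ‖z 1‖ ‖z 2‖ (σ + (Complex.arg (z 1) + Complex.arg (z 2))) := by
    simp only [Xnorm, Xfun, norm_mul_exp_add_conj]
  rw [hX, phase]
  rcases values_cases_of_cover_fin_four (n := fun k => ‖z k‖) hpart h1 h2 h3 h4 with
    ⟨e0, e3, e1, e2⟩ | ⟨e0, e3, e1, e2⟩ | ⟨h03, h12⟩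
  · simp only [e0, e3, e1, e2]
    exact (isGreatest_range_lawOfCosines_self_add_lawOfCosines_self hr hs _ _).csSup_eq
  · simp only [e0, e3, e1, e2]
    refine
      (isGreatest_range_lawOfCosines_self_add_lawOfCosines_self hs hr _ _).csSup_eq.trans ?_
    ring_nf
  · simp only [lawOfCosines_eq_of_pair h03, lawOfCosines_eq_of_pair h12]
    exact (isGreatest_range_lawOfCosines_add_lawOfCosines (mul_nonneg hr hs) _ _).csSup_eq

theorem stmt_11 (z : Fin 4 → ℂ) (r s : ℝ) (i₁ i₂ i₃ i₄ : Fin 4)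
    (hpart : ({i₁, i₂, i₃, i₄} : Finset (Fin 4)) = Finset.univ)
    (h12 : i₁ ≠ i₂) (h34 : i₃ ≠ i₄)
    (h1 : ‖z i₁‖ = r) (h2 : ‖z i₂‖ = r)
    (h3 : ‖z i₃‖ = s) (h4 : ‖z i₄‖ = s) :
    Xnorm z = 2 * Real.sqrt (r ^ 2 + s ^ 2 + 2 * r * s * |Real.cos (phase z / 2)|) :=
  stmt_11_general z r s i₁ i₂ i₃ i₄ hpart h1 h2 h3 h4
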